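/- arXiv:2206.10503 — 3 statements merged into one kernel-verified Lean document; each statement's English description precedes it below -/
import Mathlib

section
/- Let A, B ∈ ℝ^{d×d} (d ≥ 1) and let C ∈ ℝ^{d×d} with A ≠ 0, B ≠ 0. Then | (A:C)/|A| · A − (B:C)/|B| · B | ≤ 3 |A − B| |C|, where A:B denotes the Frobenius inner product and |·| the Frobenius norm. -/
/-!
Write `û = ‖u‖⁻¹ • u`, so that the Smagorinsky term is `(A:C) Â`. Splitting
`(A:C) Â - (B:C) B̂ = (A - B : C) Â + (B:C) (Â - B̂)`, the first summand is at most
`|A - B| |C|` because `|Â| ≤ 1`. For the second, `|B| (Â - B̂) = (A - B) + (|B| - |A|) Â`,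
so `|B| |Â - B̂| ≤ 2 |A - B|`, and `|B:C| ≤ |B| |C|` turns this into `2 |A - B| |C|`.
-/

open NormedSpace

section Normalize

variable {V : Type*} [NormedAddCommGroup V] [NormedSpace ℝ V]

lemma norm_normalize_le_one (x : V) : ‖normalize x‖ ≤ 1 := by
  rw [NormedSpace.normalize, norm_smul, norm_inv, norm_norm]
  exact inv_mul_le_one

lemma norm_mul_norm_normalize_sub_le (x y : V) :
    ‖y‖ * ‖normalize x - normalize y‖ ≤ 2 * ‖x - y‖ := by
  have hsplit : ‖y‖ • (normalize x - normalize y) = (x - y) + (‖y‖ - ‖x‖) • normalize x := by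
    linear_combination (norm := module) norm_smul_normalize x - norm_smul_normalize y
  calc ‖y‖ * ‖normalize x - normalize y‖
      = ‖(x - y) + (‖y‖ - ‖x‖) • normalize x‖ := by
        rw [← hsplit, norm_smul, norm_norm]
    _ ≤ ‖x - y‖ + |‖y‖ - ‖x‖| * ‖normalize x‖ := by
        grw [norm_add_le, norm_smul, Real.norm_eq_abs]
    _ ≤ ‖x - y‖ + ‖x - y‖ * 1 := by
        grw [abs_norm_sub_norm_le y x, norm_sub_rev y x, norm_normalize_le_one]
    _ = 2 * ‖x - y‖ := by ring

end Normalize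

lemma norm_inner_smul_normalize_sub_le {E : Type*} [NormedAddCommGroup E]
    [InnerProductSpace ℝ E] (x y z : E) :
    ‖inner ℝ x z • normalize x - inner ℝ y z • normalize y‖ ≤ 3 * ‖x - y‖ * ‖z‖ := by
  have hsplit : inner ℝ x z • normalize x - inner ℝ y z • normalize y
      = inner ℝ (x - y) z • normalize x + inner ℝ y z • (normalize x - normalize y) := by
    rw [inner_sub_left]
    module
  calc ‖inner ℝ x z • normalize x - inner ℝ y z • normalize y‖
      ≤ |inner ℝ (x - y) z| * ‖normalize x‖
        + |inner ℝ y z| * ‖normalize x - normalize y‖ := by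
        grw [hsplit, norm_add_le, norm_smul, norm_smul, Real.norm_eq_abs, Real.norm_eq_abs]
    _ ≤ ‖x - y‖ * ‖z‖ * 1 + ‖z‖ * (‖y‖ * ‖normalize x - normalize y‖) := by
        grw [abs_real_inner_le_norm, abs_real_inner_le_norm, norm_normalize_le_one]
        exact le_of_eq (by ring)
    _ ≤ ‖x - y‖ * ‖z‖ * 1 + ‖z‖ * (2 * ‖x - y‖) := by
        grw [norm_mul_norm_normalize_sub_le]
    _ = 3 * ‖x - y‖ * ‖z‖ := by ring

theorem smagorinsky_pointwise_lipschitz_general {d : ℕ}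
    (A B C : EuclideanSpace ℝ (Fin d × Fin d)) :
    ‖((inner ℝ A C : ℝ) / ‖A‖) • A - ((inner ℝ B C : ℝ) / ‖B‖) • B‖ ≤ 3 * ‖A - B‖ * ‖C‖ := by
  simpa only [div_eq_mul_inv, mul_smul, NormedSpace.normalize] using
    norm_inner_smul_normalize_sub_le A B C

/-- pointwise Lipschitz estimate for the Smagorinsky nonlinearity:
for `A, B ≠ 0`, `|(A:C)/|A| ⬝ A − (B:C)/|B| ⬝ B| ≤ 3 |A − B| |C|`.
Matrices in `ℝ^{d×d}` with the Frobenius inner product `A:C` and Frobenius norm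
are modeled as `EuclideanSpace ℝ (Fin d × Fin d)`. -/
theorem smagorinsky_pointwise_lipschitz {d : ℕ} (hd : 1 ≤ d)
    (A B C : EuclideanSpace ℝ (Fin d × Fin d)) (hA : A ≠ 0) (hB : B ≠ 0) :
    ‖((inner ℝ A C : ℝ) / ‖A‖) • A - ((inner ℝ B C : ℝ) / ‖B‖) • B‖ ≤ 3 * ‖A - B‖ * ‖C‖ :=
  smagorinsky_pointwise_lipschitz_general A B C
end

section
/- Let X be a real Hilbert space with finite-dimensional subspace X_h, let A(·,·): X_h × X_h → ℝ (nonlinear in first argument, linear in second) admit a Gateaux derivative ∂₁A(U, V)(Z) in its first argument, and suppose ∂₁A is Lipschitz in the base point: |∂₁A(U¹,V)(Z) − ∂₁A(U²,V)(Z)| ≤ ρ_T ‖U¹−U²‖ ‖Z‖ ‖V‖ for all U¹,U²,Z,V ∈ X_h. Suppose U_N ∈ X_h satisfies the inf-sup condition inf_Z sup_V ∂₁A(U_N,V)(Z)/(‖Z‖‖V‖) = β_N > 0. If U¹ and U² are two solutions of A(U,V) = F(V) for all V ∈ X_h, both lying in the open ball of radius β_N/ρ_T around U_N, then U¹ = U².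 -/
/-- BRR local uniqueness. Let `X_h` be a finite-dimensional subspace
of a real Hilbert space `X`, `A : X_h × X_h → ℝ` linear in its second argument,
with Gateaux derivative `D U V Z = ∂₁A(U,V)(Z)` in the first argument that is
Lipschitz in the base point with constant `ρ_T`, and satisfying the inf-sup
condition with constant `β_N > 0` at `U_N`. Then two solutions of
`A(U,V) = F(V) ∀V` lying in the open ball `B(U_N, β_N/ρ_T)` coincide. -/
theorem brr_local_uniqueness
    {X : Type*} [NormedAddCommGroup X] [InnerProductSpace ℝ X] [CompleteSpace X]
    (Xh : Submodule ℝ X) [FiniteDimensional ℝ Xh]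
    (A : Xh → Xh → ℝ) (hlin : ∀ U : Xh, IsLinearMap ℝ (A U))
    (D : Xh → Xh → Xh → ℝ)
    (hGateaux : ∀ U V Z : Xh, HasDerivAt (fun t : ℝ => A (U + t • Z) V) (D U V Z) 0)
    (ρT : ℝ) (hρ : 0 < ρT)
    (hLip : ∀ U₁ U₂ V Z : Xh, |D U₁ V Z - D U₂ V Z| ≤ ρT * ‖U₁ - U₂‖ * ‖Z‖ * ‖V‖)
    (UN : Xh) (βN : ℝ) (hβ : 0 < βN)
    (hinfsup : ∀ Z : Xh, ∀ c : ℝ, (∀ V : Xh, V ≠ 0 → D UN V Z / ‖V‖ ≤ c) → βN * ‖Z‖ ≤ c)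
    (F : Xh → ℝ)
    (U₁ U₂ : Xh) (hU₁ : ∀ V : Xh, A U₁ V = F V) (hU₂ : ∀ V : Xh, A U₂ V = F V)
    (hball₁ : ‖U₁ - UN‖ < βN / ρT) (hball₂ : ‖U₂ - UN‖ < βN / ρT) :
    U₁ = U₂ := by
  set E : Xh := U₁ - U₂ with hE
  set m : ℝ := max ‖U₁ - UN‖ ‖U₂ - UN‖ with hm
  have hmlt : m < βN / ρT := max_lt hball₁ hball₂
  have hm0 : 0 ≤ m := le_max_of_le_left (norm_nonneg _)
  -- derivative of g t = A (U₂ + t•E) V at any point t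
  have hderiv : ∀ (V : Xh) (t : ℝ),
      HasDerivAt (fun s : ℝ => A (U₂ + s • E) V) (D (U₂ + t • E) V E) t := by
    intro V t
    have h0 := hGateaux (U₂ + t • E) V E
    have hin : HasDerivAt (fun s : ℝ => s - t) 1 t := by
      simpa using (hasDerivAt_id t).sub_const t
    have h0' : HasDerivAt (fun s : ℝ => A (U₂ + t • E + s • E) V) (D (U₂ + t • E) V E) (t - t) := by
      rw [sub_self]; exact h0
    have hc : HasDerivAt ((fun h : ℝ => A (U₂ + t • E + h • E) V) ∘ (fun s : ℝ => s - t))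
        (D (U₂ + t • E) V E * 1) t := HasDerivAt.comp t h0' hin
    have heq : ((fun h : ℝ => A (U₂ + t • E + h • E) V) ∘ (fun s : ℝ => s - t))
        = fun s : ℝ => A (U₂ + s • E) V := by
      funext s
      simp only [Function.comp]
      congr 1
      module
    rw [heq] at hc
    simpa using hc
  -- key bound
  have hkey : ∀ V : Xh, V ≠ 0 → D UN V E / ‖V‖ ≤ ρT * m * ‖E‖ := by
    intro V hV
    -- Rolle on g
    have hcont : ContinuousOn (fun s : ℝ => A (U₂ + s • E) V) (Set.Icc 0 1) :=
      fun t _ => ((hderiv V t).continuousAt).continuousWithinAt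
    have heq : A (U₂ + (0:ℝ) • E) V = A (U₂ + (1:ℝ) • E) V := by
      have h1 : U₂ + (1:ℝ) • E = U₁ := by rw [one_smul, hE]; abel
      have h0 : U₂ + (0:ℝ) • E = U₂ := by rw [zero_smul, add_zero]
      rw [h0, h1, hU₁, hU₂]
    obtain ⟨c, hc, hc0⟩ := exists_hasDerivAt_eq_zero (by norm_num : (0:ℝ) < 1)
      hcont heq (fun t _ => hderiv V t)
    obtain ⟨hc1, hc2⟩ := hc
    -- D UN V E = D UN V E - D (U₂ + c•E) V E
    have hlip := hLip UN (U₂ + c • E) V E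
    rw [hc0, sub_zero] at hlip
    have hnorm : ‖UN - (U₂ + c • E)‖ ≤ m := by
      have hrw : UN - (U₂ + c • E) = (1 - c) • (UN - U₂) + c • (UN - U₁) := by
        rw [hE]
        module
      calc ‖UN - (U₂ + c • E)‖
          ≤ ‖(1 - c) • (UN - U₂)‖ + ‖c • (UN - U₁)‖ := by rw [hrw]; exact norm_add_le _ _
        _ = (1 - c) * ‖UN - U₂‖ + c * ‖UN - U₁‖ := by
            rw [norm_smul, norm_smul, Real.norm_eq_abs, Real.norm_eq_abs,
              abs_of_nonneg (by linarith), abs_of_nonneg hc1.le]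
        _ ≤ (1 - c) * m + c * m := by
            have e1 : ‖UN - U₂‖ ≤ m := by rw [norm_sub_rev]; exact le_max_right _ _
            have e2 : ‖UN - U₁‖ ≤ m := by rw [norm_sub_rev]; exact le_max_left _ _
            have : 0 ≤ 1 - c := by linarith
            nlinarith
        _ = m := by ring
    have hDbound : D UN V E ≤ ρT * m * ‖E‖ * ‖V‖ := by
      calc D UN V E ≤ |D UN V E| := le_abs_self _
        _ ≤ ρT * ‖UN - (U₂ + c • E)‖ * ‖E‖ * ‖V‖ := hlip
        _ ≤ ρT * m * ‖E‖ * ‖V‖ := by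
            have h1 := mul_le_mul_of_nonneg_left hnorm hρ.le
            exact mul_le_mul_of_nonneg_right
              (mul_le_mul_of_nonneg_right h1 (norm_nonneg E)) (norm_nonneg V)
    have hVpos : (0:ℝ) < ‖V‖ := norm_pos_iff.mpr hV
    rw [div_le_iff₀ hVpos]
    exact hDbound
  have hmain := hinfsup E (ρT * m * ‖E‖) hkey
  have hEzero : ‖E‖ = 0 := by
    by_contra h
    have hEpos : 0 < ‖E‖ := lt_of_le_of_ne (norm_nonneg _) (Ne.symm h)
    have hlt : m * ρT < βN := (lt_div_iff₀ hρ).mp hmlt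
    nlinarith [hmain, hEpos, hlt]
  have : E = 0 := norm_eq_zero.mp hEzero
  rw [hE] at this
  exact sub_eq_zero.mp this
end

section
/- Let ρ > 0, α > 0, and suppose real numbers a ≥ 0 (velocity norm), b ≥ 0 (stabilized pressure part), z ≥ 0 (sup term), p ≥ 0 (pressure norm) and S ≥ 0 satisfy: (i) ρ a² + b² ≤ S √(a² + p²), (ii) z ≤ S + C' a for some C' > 0, and (iii) p ≤ α (z + b). Then there exists a constant M > 0 depending only on ρ, α, C' such that √(a² + p²) ≤ M S. -/
set_option maxHeartbeats 1000000


/-- algebraic lemma behind the inf-sup stability of the tangent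
operator for the LPS-stabilized Smagorinsky model. -/
theorem algebraic_infsup_lemma (ρ α C' : ℝ) (hρ : 0 < ρ) (hα : 0 < α) (hC' : 0 < C') :
    ∃ M : ℝ, 0 < M ∧
      ∀ a b z p S : ℝ, 0 ≤ a → 0 ≤ b → 0 ≤ z → 0 ≤ p → 0 ≤ S →
        ρ * a ^ 2 + b ^ 2 ≤ S * Real.sqrt (a ^ 2 + p ^ 2) →
        z ≤ S + C' * a →
        p ≤ α * (z + b) →
        Real.sqrt (a ^ 2 + p ^ 2) ≤ M * S := by
  set C : ℝ := 1 + α * C' with hCdef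
  have hC0 : 0 < C := by positivity
  set D : ℝ := (C + α) * (C + ρ * α) + 2 * ρ * α with hDdef
  have hD0 : 0 < D := by positivity
  refine ⟨D / ρ, div_pos hD0 hρ, ?_⟩
  intro a b z p S ha hb hz hp hS h1 h2 h3
  set N : ℝ := Real.sqrt (a ^ 2 + p ^ 2) with hNdef
  have hN0 : 0 ≤ N := Real.sqrt_nonneg _
  have hN2 : N ^ 2 = a ^ 2 + p ^ 2 := Real.sq_sqrt (by positivity)
  have hNle : N ≤ a + p := by
    rw [hNdef, show a + p = Real.sqrt ((a + p) ^ 2) from (Real.sqrt_sq (by positivity)).symm]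
    exact Real.sqrt_le_sqrt (by nlinarith)
  have hp2 : p ≤ α * (S + C' * a + b) := by nlinarith
  have key : N ≤ C * a + α * b + α * S := by
    rw [hCdef]; nlinarith
  have ha2 : ρ * a ^ 2 ≤ S * N := by nlinarith [sq_nonneg b]
  have hb2 : b ^ 2 ≤ S * N := by nlinarith [mul_nonneg hρ.le (sq_nonneg a)]
  have hmain : ρ * N ^ 2 ≤ D * (S * N) := by
    have hkeyN : (ρ * (C + α)) * (N * N) ≤ (ρ * (C + α)) * ((C * a + α * b + α * S) * N) :=
      mul_le_mul_of_nonneg_left (mul_le_mul_of_nonneg_right key hN0)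
        (by positivity)
    have hya : 0 ≤ (ρ * C / 2) * ((C + α) * a - N) ^ 2 := by positivity
    have hyb : 0 ≤ (ρ * α / 2) * ((C + α) * b - N) ^ 2 := by positivity
    have hA : (C * (C + α) ^ 2 / 2) * (ρ * a ^ 2) ≤ (C * (C + α) ^ 2 / 2) * (S * N) :=
      mul_le_mul_of_nonneg_left ha2 (by positivity)
    have hB : (ρ * α * (C + α) ^ 2 / 2) * (b ^ 2) ≤ (ρ * α * (C + α) ^ 2 / 2) * (S * N) :=
      mul_le_mul_of_nonneg_left hb2 (by positivity)
    have hsum : (C + α) * (ρ * N ^ 2) ≤ (C + α) * (D * (S * N)) := by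
      rw [hDdef]
      clear_value C D N
      linarith [hkeyN, hya, hyb, hA, hB]
    exact le_of_mul_le_mul_left hsum (by positivity)
  rcases eq_or_lt_of_le hN0 with h | h
  · rw [← h]
    have : 0 ≤ D / ρ * S := mul_nonneg (div_pos hD0 hρ).le hS
    linarith
  · have h4 : ρ * N ≤ D * S := le_of_mul_le_mul_right (by nlinarith [hmain]) h
    rw [div_mul_eq_mul_div, le_div_iff₀ hρ]
    nlinarith [h4]
end
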